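/- arXiv:2603.23834 — 3 statements merged into one kernel-verified Lean document; each statement's English description precedes it below -/
import Mathlib

section
/- Let N ≥ 2, let e ∈ 𝕊^{N−1}, let Ω ⊆ ℝ^N be a nonempty open connected set that is strongly unbounded in the direction e, and let u,v : [0,∞) × Ω̄ → [0,1] be continuous. Then sup_{z ∈ ℝ^N} w*(e,z) = w*(e), the equality being understood in the extended nonnegative reals [0,+∞]. -/
open Set Metric Filter Topology ENNReal

noncomputable section

/-- Euclidean space `ℝ^N`. -/
abbrev Euc (N : ℕ) := EuclideanSpace ℝ (Fin N)

variable {N : ℕ}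

/-- `Ω` is strongly unbounded in the direction `e`. -/
def StronglyUnbounded (Ω : Set (Euc N)) (e : Euc N) : Prop :=
  ∃ R : ℝ, 0 ≤ R ∧ ∃ s₀ : ℝ, ∀ s : ℝ, s₀ ≤ s →
    (closedBall (s • e) R ∩ closure Ω).Nonempty

/-- `R(e)`: the infimum of the admissible radii in the direction `e`. -/
def dirRadius (Ω : Set (Euc N)) (e : Euc N) : ℝ :=
  sInf {R : ℝ | 0 ≤ R ∧ ∃ s₀ : ℝ, ∀ s : ℝ, s₀ ≤ s →
    (closedBall (s • e) R ∩ closure Ω).Nonempty}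

/-- `R(e,z)`, as an extended nonnegative real. -/
def dirRadiusAt (Ω : Set (Euc N)) (e z : Euc N) : ℝ≥0∞ :=
  sInf {r : ℝ≥0∞ | ∃ R : ℝ, 0 ≤ R ∧ r = ENNReal.ofReal R ∧ ∃ s₀ : ℝ, ∀ s : ℝ, s₀ ≤ s →
    (closedBall (z + s • e) R ∩ closure Ω).Nonempty}

/-- The set of speeds `c > 0` entering the definition of the upper spreading speed `w*(e)`. -/
def upperSpeedSet (Ω : Set (Euc N)) (e : Euc N) (u v : ℝ → Euc N → ℝ) : Set ℝ :=
  {c : ℝ | 0 < c ∧ ∀ A : ℝ, dirRadius Ω e < A → ∀ ε > (0:ℝ), ∃ T : ℝ, ∀ t : ℝ, T ≤ t →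
    ∀ s : ℝ, c * t ≤ s → ∀ x ∈ closedBall (s • e) A ∩ closure Ω,
      |u t x| + |1 - v t x| ≤ ε}

/-- The upper spreading speed `w*(e)` in the direction `e`, in `[0,+∞]`. -/
def wUpper (Ω : Set (Euc N)) (e : Euc N) (u v : ℝ → Euc N → ℝ) : ℝ≥0∞ :=
  sInf (ENNReal.ofReal '' upperSpeedSet Ω e u v)

/-- The set of speeds `c > 0` entering the definition of `w*(e,z)`. -/
def upperSpeedSetAt (Ω : Set (Euc N)) (e z : Euc N) (u v : ℝ → Euc N → ℝ) : Set ℝ :=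
  {c : ℝ | 0 < c ∧ ∃ A : ℝ, 0 < A ∧
    (∃ s₀ : ℝ, ∀ s : ℝ, s₀ ≤ s → (closedBall (z + s • e) A ∩ closure Ω).Nonempty) ∧
    ∀ ε > (0:ℝ), ∃ T : ℝ, ∀ t : ℝ, T ≤ t → ∀ s : ℝ, c * t ≤ s →
      ∀ x ∈ closedBall (z + s • e) A ∩ closure Ω, |u t x| + |1 - v t x| ≤ ε}

/-- The upper spreading speed `w*(e,z)` along the half-line `z + ℝ₊ e`, in `[0,+∞]`. -/
def wUpperAt (Ω : Set (Euc N)) (e z : Euc N) (u v : ℝ → Euc N → ℝ) : ℝ≥0∞ :=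
  sInf (ENNReal.ofReal '' upperSpeedSetAt Ω e z u v)

/-- The set of speeds `c > 0` entering the definition of the lower spreading speed `w_*(e)`. -/
def lowerSpeedSet (Ω : Set (Euc N)) (e : Euc N) (u v : ℝ → Euc N → ℝ) : Set ℝ :=
  {c : ℝ | 0 < c ∧ ∀ A : ℝ, dirRadius Ω e < A → ∀ ε > (0:ℝ), ∃ T : ℝ, ∀ τ t : ℝ,
    T ≤ τ → T ≤ t → τ ≤ c * t → ∀ s : ℝ, τ ≤ s → s ≤ c * t →
    ∀ x ∈ closedBall (s • e) A ∩ closure Ω, |1 - u t x| + |v t x| ≤ ε}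

/-- The lower spreading speed `w_*(e)` in the direction `e`, in `[0,+∞]` (`0` if no admissible speed). -/
def wLower (Ω : Set (Euc N)) (e : Euc N) (u v : ℝ → Euc N → ℝ) : ℝ≥0∞ :=
  sSup (ENNReal.ofReal '' lowerSpeedSet Ω e u v)

/-- The set of speeds `c > 0` entering the definition of `w_*(e,z)`. -/
def lowerSpeedSetAt (Ω : Set (Euc N)) (e z : Euc N) (u v : ℝ → Euc N → ℝ) : Set ℝ :=
  {c : ℝ | 0 < c ∧ ∃ A : ℝ, 0 < A ∧
    (∃ s₀ : ℝ, ∀ s : ℝ, s₀ ≤ s → (closedBall (z + s • e) A ∩ closure Ω).Nonempty) ∧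
    ∀ ε > (0:ℝ), ∃ T : ℝ, ∀ τ t : ℝ, T ≤ τ → T ≤ t → τ ≤ c * t →
      ∀ s : ℝ, τ ≤ s → s ≤ c * t →
      ∀ x ∈ closedBall (z + s • e) A ∩ closure Ω, |1 - u t x| + |v t x| ≤ ε}

/-- The lower spreading speed `w_*(e,z)` along the half-line `z + ℝ₊ e`, in `[0,+∞]`. -/
def wLowerAt (Ω : Set (Euc N)) (e z : Euc N) (u v : ℝ → Euc N → ℝ) : ℝ≥0∞ :=
  sSup (ENNReal.ofReal '' lowerSpeedSetAt Ω e z u v)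

/-- The Laplacian of a function on `ℝ^N`, as the sum of the second derivatives in the
coordinate directions. -/
def lap (f : Euc N → ℝ) (x : Euc N) : ℝ :=
  ∑ i : Fin N, fderiv ℝ (fun y => fderiv ℝ f y (EuclideanSpace.single i 1)) x
    (EuclideanSpace.single i 1)

/-- Monostability assumptions on the parameters of the Lotka-Volterra system. -/
def LVParams (d₁ d₂ r₁ r₂ a₁ a₂ : ℝ) : Prop :=
  0 < d₁ ∧ 0 < d₂ ∧ 0 < r₁ ∧ 0 < r₂ ∧ 0 < a₁ ∧ a₁ < 1 ∧ 1 < a₂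

/-- A classical solution of the Lotka-Volterra competition-diffusion system on the whole
space `ℝ^N`: bounded and continuous on `[0,∞) × ℝ^N`, `C¹` in `t` and `C²` in `x` on
`(0,∞) × ℝ^N`, satisfying the system pointwise. -/
structure IsLVSolution (d₁ d₂ r₁ r₂ a₁ a₂ : ℝ) (u v : ℝ → Euc N → ℝ) : Prop where
  contu : ContinuousOn (fun p : ℝ × Euc N => u p.1 p.2) (Ici 0 ×ˢ univ)
  contv : ContinuousOn (fun p : ℝ × Euc N => v p.1 p.2) (Ici 0 ×ˢ univ)
  bounded : ∃ M : ℝ, ∀ t : ℝ, 0 ≤ t → ∀ x : Euc N, |u t x| ≤ M ∧ |v t x| ≤ M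
  smooth_t : ∀ x : Euc N, ContDiffOn ℝ 1 (fun t => u t x) (Ioi 0) ∧
    ContDiffOn ℝ 1 (fun t => v t x) (Ioi 0)
  smooth_x : ∀ t : ℝ, 0 < t → ContDiff ℝ 2 (u t) ∧ ContDiff ℝ 2 (v t)
  eqn_u : ∀ t : ℝ, 0 < t → ∀ x : Euc N, deriv (fun τ => u τ x) t =
    d₁ * lap (u t) x + r₁ * u t x * (1 - u t x - a₁ * v t x)
  eqn_v : ∀ t : ℝ, 0 < t → ∀ x : Euc N, deriv (fun τ => v τ x) t =
    d₂ * lap (v t) x + r₂ * v t x * (1 - v t x - a₂ * u t x)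

/-- An admissible initial datum: continuous with values in `[0,1]`, `u₀ ≢ 0`, and
`(u₀,v₀) = (0,1)` outside a compact set. -/
def AdmissibleInit (u₀ v₀ : Euc N → ℝ) : Prop :=
  Continuous u₀ ∧ Continuous v₀ ∧ (∀ x, u₀ x ∈ Icc (0:ℝ) 1 ∧ v₀ x ∈ Icc (0:ℝ) 1) ∧
  (∃ x, u₀ x ≠ 0) ∧ ∃ K : Set (Euc N), IsCompact K ∧ ∀ x ∉ K, u₀ x = 0 ∧ v₀ x = 1

/-- A classical solution of the Lotka-Volterra competition-diffusion system on a domain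
`Ω ⊆ ℝ^N` (no boundary condition): continuous on `[0,∞) × Ω̄`, `C¹` in `t` and `C²` in `x`
on `(0,∞) × Ω`, satisfying the system pointwise on `(0,∞) × Ω`. -/
structure IsLVSolutionOn (d₁ d₂ r₁ r₂ a₁ a₂ : ℝ) (Ω : Set (Euc N))
    (u v : ℝ → Euc N → ℝ) : Prop where
  contu : ContinuousOn (fun p : ℝ × Euc N => u p.1 p.2) (Ici 0 ×ˢ closure Ω)
  contv : ContinuousOn (fun p : ℝ × Euc N => v p.1 p.2) (Ici 0 ×ˢ closure Ω)
  smooth_t : ∀ x ∈ Ω, ContDiffOn ℝ 1 (fun t => u t x) (Ioi 0) ∧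
    ContDiffOn ℝ 1 (fun t => v t x) (Ioi 0)
  smooth_x : ∀ t : ℝ, 0 < t → ContDiffOn ℝ 2 (u t) Ω ∧ ContDiffOn ℝ 2 (v t) Ω
  eqn_u : ∀ t : ℝ, 0 < t → ∀ x ∈ Ω, deriv (fun τ => u τ x) t =
    d₁ * lap (u t) x + r₁ * u t x * (1 - u t x - a₁ * v t x)
  eqn_v : ∀ t : ℝ, 0 < t → ∀ x ∈ Ω, deriv (fun τ => v τ x) t =
    d₂ * lap (v t) x + r₂ * v t x * (1 - v t x - a₂ * u t x)

/-- `Ω` has the interior ball property with radius `ε₀`. -/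
def InteriorBallProperty (Ω : Set (Euc N)) (ε₀ : ℝ) : Prop :=
  ∀ x ∈ frontier Ω, ∃ y : Euc N, ball y ε₀ ⊆ Ω ∧ dist x y = ε₀

/-- The geodesic distance in `Ω̄`: the infimum of the lengths (total variations) of
continuous paths joining `x` to `y` within `Ω̄`, `+∞` if there is no rectifiable path. -/
def geoDist (Ω : Set (Euc N)) (x y : Euc N) : ℝ≥0∞ :=
  sInf {L : ℝ≥0∞ | ∃ γ : ℝ → Euc N, ContinuousOn γ (Icc 0 1) ∧ γ 0 = x ∧ γ 1 = y ∧
    MapsTo γ (Icc 0 1) (closure Ω) ∧ L = eVariationOn γ (Icc 0 1)}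

/-- Hypothesis `H_{y,z}`: the points `y` and `z` are asymptotically connected in the
direction `e` within `Ω`. -/
def HypAsympConnected (Ω : Set (Euc N)) (e y z : Euc N) : Prop :=
  ∃ Ry Rz : ℝ, dirRadiusAt Ω e y < ENNReal.ofReal Ry ∧ dirRadiusAt Ω e z < ENNReal.ofReal Rz ∧
    ∃ C : ℝ≥0∞, C ≠ ⊤ ∧ ∃ s₀ : ℝ, ∀ s : ℝ, s₀ ≤ s →
      ∀ y' ∈ closedBall (y + s • e) Ry ∩ closure Ω,
      ∀ z' ∈ closedBall (z + s • e) Rz ∩ closure Ω, geoDist Ω y' z' ≤ C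

/-! Each admissible speed for `w*(e)` is admissible along every half-line `z + ℝ₊e`: a ball of
radius `A` around `z + se` lies in the ball of radius `A + ‖z‖` around `se`, and strong
unboundedness provides radii for which these balls keep meeting `Ω̄`. Conversely, a speed `r`
admissible along every half-line is admissible for `w*(e)`: by compactness, finitely many of the
balls `B(z + se, A_z)` cover `B̄(se, B)`, uniformly in `s`, so finitely many convergence times
suffice. -/

section SpreadingSpeeds

variable {Ω : Set (Euc N)} {e : Euc N} {u v : ℝ → Euc N → ℝ}

lemma dirRadius_le {R s₀ : ℝ} (hR : 0 ≤ R)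
    (hs₀ : ∀ s : ℝ, s₀ ≤ s → (closedBall (s • e) R ∩ closure Ω).Nonempty) :
    dirRadius Ω e ≤ R :=
  csInf_le ⟨0, fun _ h => h.1⟩ ⟨hR, s₀, hs₀⟩

lemma closedBall_add_subset_closedBall (z y : Euc N) (A : ℝ) :
    closedBall (z + y) A ⊆ closedBall y (A + ‖z‖) :=
  closedBall_subset_closedBall' (by rw [dist_add_self_left])

lemma closedBall_subset_closedBall_add (z y : Euc N) (A : ℝ) :
    closedBall y A ⊆ closedBall (z + y) (A + ‖z‖) :=
  closedBall_subset_closedBall' (by rw [dist_comm, dist_add_self_left])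

lemma upperSpeedSet_subset_upperSpeedSetAt (hsu : StronglyUnbounded Ω e) (z : Euc N) :
    upperSpeedSet Ω e u v ⊆ upperSpeedSetAt Ω e z u v := by
  rintro c ⟨hc, hconv⟩
  obtain ⟨R, hR, s₀, hs₀⟩ := hsu
  refine ⟨hc, R + ‖z‖ + 1, by positivity, ⟨s₀, fun s hs => ?_⟩, fun ε hε => ?_⟩
  · obtain ⟨y, hy, hyΩ⟩ := hs₀ s hs
    exact ⟨y, closedBall_subset_closedBall_add z _ R |>.trans
      (closedBall_subset_closedBall (by linarith)) hy, hyΩ⟩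
  · have hA : dirRadius Ω e < R + ‖z‖ + 1 + ‖z‖ := by
      linarith [dirRadius_le hR hs₀, norm_nonneg z]
    obtain ⟨T, hT⟩ := hconv _ hA ε hε
    exact ⟨T, fun t ht s hs x hx =>
      hT t ht s hs x ⟨closedBall_add_subset_closedBall z _ _ hx.1, hx.2⟩⟩

lemma wUpperAt_le_wUpper (hsu : StronglyUnbounded Ω e) (z : Euc N) :
    wUpperAt Ω e z u v ≤ wUpper Ω e u v :=
  sInf_le_sInf (image_mono (upperSpeedSet_subset_upperSpeedSetAt hsu z))

lemma mem_upperSpeedSetAt_of_le {z : Euc N} {c c' : ℝ} (hc : c ∈ upperSpeedSetAt Ω e z u v)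
    (hcc' : c ≤ c') : c' ∈ upperSpeedSetAt Ω e z u v := by
  obtain ⟨hc, A, hA, hmeet, hconv⟩ := hc
  refine ⟨hc.trans_le hcc', A, hA, hmeet, fun ε hε => ?_⟩
  obtain ⟨T, hT⟩ := hconv ε hε
  refine ⟨max T 0, fun t ht s hs => hT t (le_of_max_le_left ht) s ?_⟩
  calc c * t ≤ c' * t := mul_le_mul_of_nonneg_right hcc' (le_of_max_le_right ht)
    _ ≤ s := hs

lemma exists_lt_of_sInf_ofReal_image_lt {S : Set ℝ} {r : ℝ}
    (h : sInf (ENNReal.ofReal '' S) < ENNReal.ofReal r) : ∃ c ∈ S, c < r := by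
  obtain ⟨_, ⟨c, hc, rfl⟩, hcr⟩ := sInf_lt_iff.mp h
  exact ⟨c, hc, (ENNReal.ofReal_lt_ofReal_iff'.mp hcr).1⟩

lemma mem_upperSpeedSetAt_of_wUpperAt_lt {z : Euc N} {r : ℝ}
    (h : wUpperAt Ω e z u v < ENNReal.ofReal r) : r ∈ upperSpeedSetAt Ω e z u v := by
  obtain ⟨c, hc, hcr⟩ := exists_lt_of_sInf_ofReal_image_lt h
  exact mem_upperSpeedSetAt_of_le hc hcr.le

lemma mem_upperSpeedSet_of_forall_mem_upperSpeedSetAt {r : ℝ} (hr : 0 < r)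
    (h : ∀ z, r ∈ upperSpeedSetAt Ω e z u v) : r ∈ upperSpeedSet Ω e u v := by
  choose A hA _ hconv using fun z => (h z).2
  refine ⟨hr, fun B _ ε hε => ?_⟩
  obtain ⟨F, hF⟩ := (isCompact_closedBall (0 : Euc N) B).elim_finite_subcover
    (fun z => ball z (A z)) (fun _ => isOpen_ball)
    fun y _ => mem_iUnion.mpr ⟨y, mem_ball_self (hA y)⟩
  have hevent : ∀ z, ∀ᶠ t in atTop, ∀ s : ℝ, r * t ≤ s →
      ∀ x ∈ closedBall (z + s • e) (A z) ∩ closure Ω, |u t x| + |1 - v t x| ≤ ε :=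
    fun z => eventually_atTop.mpr (hconv z ε hε)
  obtain ⟨T, hT⟩ := eventually_atTop.mp ((F.eventually_all).mpr fun z _ => hevent z)
  refine ⟨T, fun t ht s hs x hx => ?_⟩
  have hx₀ : x - s • e ∈ closedBall (0 : Euc N) B := by
    simpa [dist_eq_norm] using hx.1
  obtain ⟨z, hzF, hz⟩ := mem_iUnion₂.mp (hF hx₀)
  have hxz : x ∈ closedBall (z + s • e) (A z) := by
    rw [mem_closedBall, ← dist_sub_right x _ (s • e), add_sub_cancel_right]
    exact (mem_ball.mp hz).le
  exact hT t ht z hzF s hs x ⟨hxz, hx.2⟩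

lemma wUpper_le_iSup_wUpperAt : wUpper Ω e u v ≤ ⨆ z, wUpperAt Ω e z u v := by
  refine le_of_forall_gt_imp_ge_of_dense fun a ha => ?_
  obtain ⟨r, -, hsup, hra⟩ := ENNReal.lt_iff_exists_real_btwn.mp ha
  have hr : 0 < r := ENNReal.ofReal_pos.mp (zero_le.trans_lt hsup)
  have hmem : r ∈ upperSpeedSet Ω e u v :=
    mem_upperSpeedSet_of_forall_mem_upperSpeedSetAt hr fun z =>
      mem_upperSpeedSetAt_of_wUpperAt_lt ((le_iSup _ z).trans_lt hsup)
  exact (sInf_le (mem_image_of_mem _ hmem)).trans hra.le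

end SpreadingSpeeds

theorem sup_wUpperAt_eq_wUpper_general {N : ℕ} (e : Euc N) (Ω : Set (Euc N))
    (hsu : StronglyUnbounded Ω e) (u v : ℝ → Euc N → ℝ) :
    (⨆ z : Euc N, wUpperAt Ω e z u v) = wUpper Ω e u v :=
  le_antisymm (iSup_le (wUpperAt_le_wUpper hsu)) wUpper_le_iSup_wUpperAt

/-- `sup_{z ∈ ℝ^N} w*(e,z) = w*(e)` in `[0,+∞]`. -/
theorem sup_wUpperAt_eq_wUpper {N : ℕ} (hN : 2 ≤ N) (e : Euc N) (he : ‖e‖ = 1)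
    (Ω : Set (Euc N)) (hΩo : IsOpen Ω) (hΩc : IsConnected Ω)
    (hsu : StronglyUnbounded Ω e) (u v : ℝ → Euc N → ℝ)
    (hcu : ContinuousOn (fun p : ℝ × Euc N => u p.1 p.2) (Ici 0 ×ˢ closure Ω))
    (hcv : ContinuousOn (fun p : ℝ × Euc N => v p.1 p.2) (Ici 0 ×ˢ closure Ω))
    (hrange : ∀ t : ℝ, 0 ≤ t → ∀ x ∈ closure Ω,
      u t x ∈ Icc (0:ℝ) 1 ∧ v t x ∈ Icc (0:ℝ) 1) :
    (⨆ z : Euc N, wUpperAt Ω e z u v) = wUpper Ω e u v :=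
  sup_wUpperAt_eq_wUpper_general e Ω hsu u v

end
end

section
/- Let N ≥ 2, let e ∈ 𝕊^{N−1}, let Ω ⊆ ℝ^N be a nonempty open connected set that is strongly unbounded in the direction e, and let u,v : [0,∞) × Ω̄ → [0,1] be continuous and such that u(t,·) → 1 and v(t,·) → 0 locally uniformly in Ω̄ as t → +∞. Then inf_{z ∈ ℝ^N} w_*(e,z) = w_*(e), the equality being understood in the extended nonnegative reals [0,+∞]. -/
open Set Metric Filter Topology ENNReal

noncomputable section

variable {N : ℕ}

/-! Every speed admissible for `w_*(e)` is admissible along each half-line `z + ℝ₊e`, since the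
balls around `z + se` and `se` are comparable. Conversely, if a speed `c` is admissible along
every half-line, then a ball `B̄(se, A)` is covered by the translates by `se` of finitely many
balls `B(z, A_z)` covering the compact `B̄(0, A)`, so the convergence is uniform on it. Since the
admissible speeds along a half-line form an interval, the two bounds give the equality. -/

lemma closedBall_add_subset_closedBall_s1 {E : Type*} [SeminormedAddCommGroup E] (x z : E)
    (A : ℝ) : closedBall (z + x) A ⊆ closedBall x (A + ‖z‖) :=
  closedBall_subset_closedBall' (by simp)

lemma closedBall_subset_closedBall_add_s1 {E : Type*} [SeminormedAddCommGroup E] (x z : E)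
    (A : ℝ) : closedBall x A ⊆ closedBall (z + x) (A + ‖z‖) :=
  closedBall_subset_closedBall' (by simp)

section UniformlyInvaded

variable (Ω : Set (Euc N)) (u v : ℝ → Euc N → ℝ)

def UniformlyInvaded (c : ℝ) (K : ℝ → Set (Euc N)) : Prop :=
  ∀ ε > (0:ℝ), ∃ T : ℝ, ∀ τ t : ℝ, T ≤ τ → T ≤ t → τ ≤ c * t →
    ∀ s : ℝ, τ ≤ s → s ≤ c * t → ∀ x ∈ K s ∩ closure Ω, |1 - u t x| + |v t x| ≤ ε

variable {Ω u v}

lemma UniformlyInvaded.mono {c : ℝ} {K K' : ℝ → Set (Euc N)}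
    (h : UniformlyInvaded Ω u v c K) (hK : ∀ s, K' s ⊆ K s) : UniformlyInvaded Ω u v c K' := by
  intro ε hε
  obtain ⟨T, hT⟩ := h ε hε
  exact ⟨T, fun τ t hτ ht hτc s hs hsc x hx ↦
    hT τ t hτ ht hτc s hs hsc x ⟨hK s hx.1, hx.2⟩⟩

lemma UniformlyInvaded.mono_speed {c c' : ℝ} {K : ℝ → Set (Euc N)}
    (h : UniformlyInvaded Ω u v c' K) (hc : c ≤ c') : UniformlyInvaded Ω u v c K := by
  intro ε hε
  obtain ⟨T, hT⟩ := h ε hε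
  refine ⟨max T 0, fun τ t hτ ht hτc s hs hsc x hx ↦ ?_⟩
  have hct : c * t ≤ c' * t :=
    mul_le_mul_of_nonneg_right hc ((le_max_right T 0).trans ht)
  exact hT τ t ((le_max_left T 0).trans hτ) ((le_max_left T 0).trans ht) (hτc.trans hct)
    s hs (hsc.trans hct) x hx

lemma uniformlyInvaded_biUnion {ι : Type*} {F : Finset ι} {c : ℝ} {K : ι → ℝ → Set (Euc N)}
    (h : ∀ i ∈ F, UniformlyInvaded Ω u v c (K i)) :
    UniformlyInvaded Ω u v c fun s ↦ ⋃ i ∈ F, K i s := by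
  intro ε hε
  choose! T hT using fun i hi ↦ h i hi ε hε
  obtain ⟨T₀, hT₀⟩ := (F.image T).exists_le
  refine ⟨T₀, fun τ t hτ ht hτc s hs hsc x ⟨hxK, hxΩ⟩ ↦ ?_⟩
  obtain ⟨i, hi, hxi⟩ := mem_iUnion₂.mp hxK
  have hTi : T i ≤ T₀ := hT₀ _ (Finset.mem_image_of_mem T hi)
  exact hT i hi τ t (hTi.trans hτ) (hTi.trans ht) hτc s hs hsc x ⟨hxi, hxΩ⟩

end UniformlyInvaded

section SpeedSets

variable {Ω : Set (Euc N)} {e z : Euc N} {u v : ℝ → Euc N → ℝ} {c : ℝ}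

lemma mem_lowerSpeedSet_iff : c ∈ lowerSpeedSet Ω e u v ↔
    0 < c ∧ ∀ A, dirRadius Ω e < A → UniformlyInvaded Ω u v c fun s ↦ closedBall (s • e) A :=
  Iff.rfl

lemma mem_lowerSpeedSetAt_iff : c ∈ lowerSpeedSetAt Ω e z u v ↔
    0 < c ∧ ∃ A, 0 < A ∧
      (∃ s₀ : ℝ, ∀ s, s₀ ≤ s → (closedBall (z + s • e) A ∩ closure Ω).Nonempty) ∧
      UniformlyInvaded Ω u v c fun s ↦ closedBall (z + s • e) A :=
  Iff.rfl

lemma dirRadius_nonneg (hsu : StronglyUnbounded Ω e) : 0 ≤ dirRadius Ω e :=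
  le_csInf hsu fun _ hR ↦ hR.1

lemma lowerSpeedSet_subset_lowerSpeedSetAt (hsu : StronglyUnbounded Ω e) (z : Euc N) :
    lowerSpeedSet Ω e u v ⊆ lowerSpeedSetAt Ω e z u v := by
  intro c hc
  rw [mem_lowerSpeedSet_iff] at hc
  rw [mem_lowerSpeedSetAt_iff]
  obtain ⟨R, ⟨-, s₀, hs₀⟩, hR⟩ := exists_lt_of_csInf_lt hsu (lt_add_one (dirRadius Ω e))
  have hR₀ := dirRadius_nonneg hsu
  refine ⟨hc.1, dirRadius Ω e + 1 + ‖z‖, by positivity, ⟨s₀, fun s hs ↦ ?_⟩, ?_⟩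
  · refine (hs₀ s hs).mono (inter_subset_inter_left _ ?_)
    exact (closedBall_subset_closedBall_add_s1 _ z R).trans
      (closedBall_subset_closedBall (by linarith))
  · exact (hc.2 _ (by linarith [norm_nonneg z])).mono fun s ↦
      closedBall_add_subset_closedBall_s1 _ z _

lemma mem_lowerSpeedSetAt_of_le {c' : ℝ} (hc : 0 < c) (hcc' : c ≤ c')
    (h : c' ∈ lowerSpeedSetAt Ω e z u v) : c ∈ lowerSpeedSetAt Ω e z u v := by
  obtain ⟨-, A, hA, hne, hinv⟩ := mem_lowerSpeedSetAt_iff.mp h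
  exact ⟨hc, A, hA, hne, hinv.mono_speed hcc'⟩

lemma mem_lowerSpeedSet_of_forall_mem_lowerSpeedSetAt (hc : 0 < c)
    (h : ∀ z, c ∈ lowerSpeedSetAt Ω e z u v) : c ∈ lowerSpeedSet Ω e u v := by
  refine mem_lowerSpeedSet_iff.mpr ⟨hc, fun A _ ↦ ?_⟩
  choose Az hAz _ hinv using fun z ↦ (mem_lowerSpeedSetAt_iff.mp (h z)).2
  obtain ⟨F, hF⟩ := (isCompact_closedBall (0 : Euc N) A).elim_finite_subcover
    (fun z ↦ ball z (Az z)) (fun _ ↦ isOpen_ball)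
    (fun w _ ↦ mem_iUnion.2 ⟨w, mem_ball_self (hAz w)⟩)
  refine (uniformlyInvaded_biUnion (F := F) fun z _ ↦ hinv z).mono fun s x hx ↦ ?_
  have hx₀ : x - s • e ∈ closedBall (0 : Euc N) A := by
    simpa [dist_eq_norm] using hx
  obtain ⟨z, hzF, hz⟩ := mem_iUnion₂.mp (hF hx₀)
  refine mem_iUnion₂.mpr ⟨z, hzF, ?_⟩
  rw [mem_closedBall, dist_eq_norm, show x - (z + s • e) = x - s • e - z by abel,
    ← dist_eq_norm]
  exact (mem_ball.mp hz).le

end SpeedSets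

lemma iInf_sSup_ofReal_image_le {ι : Type*} {S : ι → Set ℝ} {T : Set ℝ}
    (hS : ∀ i c c', 0 < c → c ≤ c' → c' ∈ S i → c ∈ S i)
    (hT : ∀ c, 0 < c → (∀ i, c ∈ S i) → c ∈ T) :
    ⨅ i, sSup (ENNReal.ofReal '' S i) ≤ sSup (ENNReal.ofReal '' T) := by
  refine ENNReal.le_of_forall_pos_nnreal_lt fun r hr hlt ↦ ?_
  have hr' : (0 : ℝ) < r := hr
  have hmem : ∀ i, (r : ℝ) ∈ S i := fun i ↦ by
    obtain ⟨_, ⟨c, hc, rfl⟩, hrc⟩ := lt_sSup_iff.mp (hlt.trans_le (iInf_le _ i))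
    refine hS i r c hr' ?_ hc
    rw [← ENNReal.ofReal_coe_nnreal] at hrc
    exact (ENNReal.ofReal_lt_ofReal_iff_of_nonneg hr'.le).mp hrc |>.le
  simpa using le_sSup (mem_image_of_mem ENNReal.ofReal (hT r hr' hmem))

theorem inf_wLowerAt_eq_wLower_general {N : ℕ} (e : Euc N)
    (Ω : Set (Euc N))
    (hsu : StronglyUnbounded Ω e) (u v : ℝ → Euc N → ℝ) :
    (⨅ z : Euc N, wLowerAt Ω e z u v) = wLower Ω e u v :=
  le_antisymm
    (iInf_sSup_ofReal_image_le (fun _ _ _ hc hcc' ↦ mem_lowerSpeedSetAt_of_le hc hcc')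
      fun _ hc ↦ mem_lowerSpeedSet_of_forall_mem_lowerSpeedSetAt hc)
    (le_iInf fun z ↦ sSup_le_sSup (image_mono (lowerSpeedSet_subset_lowerSpeedSetAt hsu z)))

/-- `inf_{z ∈ ℝ^N} w_*(e,z) = w_*(e)` in `[0,+∞]`. -/
theorem inf_wLowerAt_eq_wLower {N : ℕ} (hN : 2 ≤ N) (e : Euc N) (he : ‖e‖ = 1)
    (Ω : Set (Euc N)) (hΩo : IsOpen Ω) (hΩc : IsConnected Ω)
    (hsu : StronglyUnbounded Ω e) (u v : ℝ → Euc N → ℝ)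
    (hcu : ContinuousOn (fun p : ℝ × Euc N => u p.1 p.2) (Ici 0 ×ˢ closure Ω))
    (hcv : ContinuousOn (fun p : ℝ × Euc N => v p.1 p.2) (Ici 0 ×ˢ closure Ω))
    (hrange : ∀ t : ℝ, 0 ≤ t → ∀ x ∈ closure Ω,
      u t x ∈ Icc (0:ℝ) 1 ∧ v t x ∈ Icc (0:ℝ) 1)
    (hloc1 : TendstoLocallyUniformlyOn (fun t x => u t x) (fun _ => (1:ℝ)) atTop (closure Ω))
    (hloc0 : TendstoLocallyUniformlyOn (fun t x => v t x) (fun _ => (0:ℝ)) atTop (closure Ω)) :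
    (⨅ z : Euc N, wLowerAt Ω e z u v) = wLower Ω e u v :=
  inf_wLowerAt_eq_wLower_general e Ω hsu u v

end
end

section
/- Let N ≥ 2, assume d₁ = d₂ and a₁a₂ ≤ 1, and let (u,v) be a classical solution on ℝ^N of the Lotka–Volterra competition–diffusion system, taking values in [0,1]×[0,1], whose initial datum (u(0,·), v(0,·)) = (u₀,v₀) is admissible. Then for every c > 2√(d₁r₁(1−a₁)), sup{ u(t,x) + |1 − v(t,x)| : x ∈ ℝ^N, |x| ≥ ct } → 0 as t → +∞. -/
open Set Metric Filter Topology ENNReal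

noncomputable section

variable {N : ℕ}

/-!
Write `d = d₁ = d₂`, `r = r₁ (1 - a₁)` and `q = 1 - v - a₂ u`. Since
`1 - u - a₁ v = (1 - a₁) + (a₁ a₂ - 1) u + a₁ q`, the condition `a₁ a₂ ≤ 1` makes `q` a
subsolution of the heat equation `∂ₜq ≤ dΔq` wherever `q > 0`, while
`∂ₜu ≤ dΔu + r u + r₁ a₁ max q 0`. By the parabolic comparison principle, `q` and then `u` lie
below multiples of the plane wave `exp (μ t - k ⟪e, x⟫)` for every unit vector `e`, as soon as
`d k² + r < μ`. With `k = √(r / d)` such a `μ` can be taken below `k c` exactly when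
`c > 2 √(d r)`, so taking `e = x / ‖x‖` bounds `u + (1 - v) = q + (1 + a₂) u` by a multiple of
`exp (-(k c - μ) t)` on `‖x‖ ≥ c t`.

The comparison principle is proved by penalising with `δ exp (κ t) (1 + ‖x‖²)` and looking at
the first time of contact, where `∂ₜ ≥ 0` and `Δ ≤ 0`.
-/

open InnerProductSpace Laplacian

lemma lap_eq_laplacian {f : Euc N → ℝ} {x : Euc N} (hf : ContDiffAt ℝ 2 f x) :
    lap f x = Δ f x := by
  have hdf : DifferentiableAt ℝ (fderiv ℝ f) x :=
    (hf.fderiv_right (m := 1) le_rfl).differentiableAt one_ne_zero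
  rw [laplacian_eq_iteratedFDeriv_orthonormalBasis f (EuclideanSpace.basisFun (Fin N) ℝ)]
  refine Finset.sum_congr rfl fun i _ => ?_
  rw [iteratedFDeriv_two_apply, EuclideanSpace.basisFun_apply,
    fderiv_clm_apply hdf (differentiableAt_const _)]
  simp

lemma lap_sub {f g : Euc N → ℝ} {x : Euc N} (hf : ContDiffAt ℝ 2 f x) (hg : ContDiffAt ℝ 2 g x) :
    lap (fun y => f y - g y) x = lap f x - lap g x := by
  rw [lap_eq_laplacian (hf.sub hg), lap_eq_laplacian hf, lap_eq_laplacian hg]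
  exact hf.laplacian_sub hg

lemma lap_const_mul (c : ℝ) {f : Euc N → ℝ} {x : Euc N} (hf : ContDiffAt ℝ 2 f x) :
    lap (fun y => c * f y) x = c * lap f x := by
  rw [lap_eq_laplacian (contDiffAt_const.mul hf), lap_eq_laplacian hf]
  exact laplacian_smul c hf

lemma lap_const_sub (c : ℝ) (f : Euc N → ℝ) (x : Euc N) :
    lap (fun y => c - f y) x = -lap f x := by
  simp [lap, fderiv_const_sub, fderiv_fun_neg]

theorem IsLocalMax.deriv_deriv_nonpos {f : ℝ → ℝ} {a : ℝ} (h : IsLocalMax f a)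
    (hc : ContinuousAt f a) : deriv (deriv f) a ≤ 0 := by
  by_contra! hpos
  have hconst : f =ᶠ[𝓝 a] fun _ => f a :=
    (h.and (isLocalMin_of_deriv_deriv_pos hpos h.deriv_eq_zero hc)).mono
      fun _ hy => le_antisymm hy.1 hy.2
  rw [hconst.deriv.deriv_eq] at hpos
  simp at hpos

lemma lap_nonpos_of_isLocalMax {f : Euc N → ℝ} {x : Euc N} (hf : ContDiff ℝ 2 f)
    (hmax : IsLocalMax f x) : lap f x ≤ 0 := by
  refine Finset.sum_nonpos fun i _ => ?_
  set w : Euc N := EuclideanSpace.single i 1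
  have hline : ∀ s : ℝ, HasDerivAt (fun s : ℝ => x + s • w) w s := fun s => by
    simpa using ((hasDerivAt_id s).smul_const w).const_add x
  have hderiv : deriv (fun s => f (x + s • w)) = fun s => fderiv ℝ f (x + s • w) w :=
    funext fun s =>
      ((hf.differentiable two_ne_zero _).hasFDerivAt.comp_hasDerivAt s (hline s)).deriv
  have hG : Differentiable ℝ fun y => fderiv ℝ f y w :=
    ((ContinuousLinearMap.apply ℝ ℝ w).contDiff.comp
      (hf.fderiv_right (m := 1) le_rfl)).differentiable one_ne_zero
  have hsecond : deriv (deriv fun s => f (x + s • w)) (0 : ℝ) =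
      fderiv ℝ (fun y => fderiv ℝ f y w) x w := by
    rw [hderiv]
    have := (hG (x + (0 : ℝ) • w)).hasFDerivAt.comp_hasDerivAt 0 (hline 0)
    simp only [zero_smul, add_zero] at this
    exact this.deriv
  have hmax' : IsLocalMax f (x + (0 : ℝ) • w) := by simpa using hmax
  rw [← hsecond]
  exact (hmax'.comp_continuous (g := fun s : ℝ => x + s • w) (by fun_prop)).deriv_deriv_nonpos
    ((hf.continuous.comp (by fun_prop)).continuousAt)

lemma deriv_nonneg_of_eventually_le_left {f : ℝ → ℝ} {a : ℝ} (hf : DifferentiableAt ℝ f a)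
    (hle : ∀ᶠ s in 𝓝[<] a, f s ≤ f a) : 0 ≤ deriv f a := by
  refine ge_of_tendsto ((hasDerivAt_iff_tendsto_slope.1 hf.hasDerivAt).mono_left
    (nhdsLT_le_nhdsNE a)) ?_
  filter_upwards [hle, self_mem_nhdsWithin] with s hs hsa
  rw [slope_def_field]
  exact div_nonneg_of_nonpos (by linarith) (by linarith [show s < a from hsa])

lemma exists_first_zero {E : Type*} [TopologicalSpace E] [T2Space E] {h : ℝ → E → ℝ}
    (hcont : ContinuousOn (fun p : ℝ × E => h p.1 p.2) (Ici 0 ×ˢ univ)) (h0 : ∀ x, h 0 x < 0)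
    {K : Set E} (hK : IsCompact K) (hfar : ∀ t ≥ 0, ∀ x ∉ K, h t x < 0)
    {T : ℝ} (hT : 0 ≤ T) {x : E} (hx : 0 ≤ h T x) :
    ∃ t₀ > 0, ∃ x₀, h t₀ x₀ = 0 ∧ (∀ y, h t₀ y ≤ 0) ∧ ∀ s ∈ Ico 0 t₀, ∀ y, h s y < 0 := by
  set S := (Icc 0 T ×ˢ K) ∩ (fun p : ℝ × E => h p.1 p.2) ⁻¹' Ici 0
  have hS : IsCompact S := (isCompact_Icc.prod hK).of_isClosed_subset
    ((hcont.mono (prod_mono Icc_subset_Ici_self (subset_univ K))).preimage_isClosed_of_isClosed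
      (isClosed_Icc.prod hK.isClosed) isClosed_Ici) inter_subset_left
  have hxK : x ∈ K := by
    by_contra hxK
    exact (hfar T hT x hxK).not_ge hx
  obtain ⟨⟨t₀, x₀⟩, ⟨⟨ht₀, -⟩, hx₀⟩, hmin⟩ :=
    hS.exists_isMinOn ⟨(T, x), ⟨⟨right_mem_Icc.2 hT, hxK⟩, hx⟩⟩ continuous_fst.continuousOn
  have hbefore : ∀ s ∈ Ico 0 t₀, ∀ y, h s y < 0 := by
    intro s hs y
    by_contra! hy
    by_cases hyK : y ∈ K
    · exact hs.2.not_ge (hmin (a := (s, y)) ⟨⟨⟨hs.1, hs.2.le.trans ht₀.2⟩, hyK⟩, hy⟩)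
    · exact (hfar s hs.1 y hyK).not_ge hy
  have ht₀pos : 0 < t₀ := ht₀.1.lt_of_ne fun h => (h0 x₀).not_ge (h ▸ hx₀)
  have hat : ∀ y, h t₀ y ≤ 0 := by
    intro y
    have hc : ContinuousAt (fun s => h s y) t₀ :=
      (hcont.continuousAt (prod_mem_nhds (Ici_mem_nhds ht₀pos) univ_mem)).comp
        (f := fun s : ℝ => (s, y)) (by fun_prop)
    refine le_of_tendsto (hc.tendsto.mono_left (nhdsWithin_le_nhds (s := Iio t₀))) ?_
    filter_upwards [Ioo_mem_nhdsLT ht₀pos] with s hs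
    exact (hbefore s ⟨hs.1.le, hs.2⟩ y).le
  exact ⟨t₀, ht₀pos, x₀, le_antisymm (hat x₀) hx₀, hat, hbefore⟩

structure ParabolicRegular (z : ℝ → Euc N → ℝ) : Prop where
  continuousOn : ContinuousOn (fun p : ℝ × Euc N => z p.1 p.2) (Ici 0 ×ˢ univ)
  differentiableAt : ∀ t > 0, ∀ x, DifferentiableAt ℝ (fun τ => z τ x) t
  contDiff : ∀ t > 0, ContDiff ℝ 2 (z t)

def heatOp (d : ℝ) (z : ℝ → Euc N → ℝ) (t : ℝ) (x : Euc N) : ℝ :=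
  deriv (fun τ => z τ x) t - d * lap (z t) x

namespace ParabolicRegular

variable {z w : ℝ → Euc N → ℝ}

lemma sub (hz : ParabolicRegular z) (hw : ParabolicRegular w) :
    ParabolicRegular fun t x => z t x - w t x where
  continuousOn := hz.continuousOn.sub hw.continuousOn
  differentiableAt t ht x := (hz.differentiableAt t ht x).sub (hw.differentiableAt t ht x)
  contDiff t ht := (hz.contDiff t ht).sub (hw.contDiff t ht)

lemma const_mul (c : ℝ) (hz : ParabolicRegular z) : ParabolicRegular fun t x => c * z t x where
  continuousOn := continuousOn_const.mul hz.continuousOn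
  differentiableAt t ht x := (hz.differentiableAt t ht x).const_mul c
  contDiff t ht := contDiff_const.mul (hz.contDiff t ht)

lemma const_sub (c : ℝ) (hz : ParabolicRegular z) : ParabolicRegular fun t x => c - z t x where
  continuousOn := continuousOn_const.sub hz.continuousOn
  differentiableAt t ht x := (hz.differentiableAt t ht x).const_sub c
  contDiff t ht := contDiff_const.sub (hz.contDiff t ht)

lemma heatOp_sub {d t : ℝ} (hz : ParabolicRegular z) (hw : ParabolicRegular w) (ht : 0 < t)
    (x : Euc N) : heatOp d (fun t x => z t x - w t x) t x = heatOp d z t x - heatOp d w t x := by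
  simp only [heatOp]
  rw [deriv_fun_sub (hz.differentiableAt t ht x) (hw.differentiableAt t ht x),
    lap_sub (hz.contDiff t ht).contDiffAt (hw.contDiff t ht).contDiffAt]
  ring

lemma heatOp_const_mul {d t : ℝ} (c : ℝ) (hz : ParabolicRegular z) (ht : 0 < t) (x : Euc N) :
    heatOp d (fun t x => c * z t x) t x = c * heatOp d z t x := by
  simp only [heatOp]
  rw [deriv_const_mul_field, lap_const_mul c (hz.contDiff t ht).contDiffAt]
  ring

end ParabolicRegular

lemma heatOp_const_sub (d c : ℝ) (z : ℝ → Euc N → ℝ) (t : ℝ) (x : Euc N) :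
    heatOp d (fun t x => c - z t x) t x = -heatOp d z t x := by
  simp only [heatOp, deriv_const_sub, lap_const_sub]
  ring

theorem ParabolicRegular.neg_of_heatOp_neg_of_eq_zero {d : ℝ} (hd : 0 ≤ d)
    {h : ℝ → Euc N → ℝ} (hh : ParabolicRegular h) (h0 : ∀ x, h 0 x < 0) {K : Set (Euc N)}
    (hK : IsCompact K) (hfar : ∀ t ≥ 0, ∀ x ∉ K, h t x < 0)
    (hzero : ∀ t > 0, ∀ x, h t x = 0 → heatOp d h t x < 0) :
    ∀ t ≥ 0, ∀ x, h t x < 0 := by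
  intro T hT x
  by_contra! hx
  obtain ⟨t₀, ht₀, x₀, hx₀, hmax, hbefore⟩ := exists_first_zero hh.continuousOn h0 hK hfar hT hx
  have htime : 0 ≤ deriv (fun τ => h τ x₀) t₀ := by
    refine deriv_nonneg_of_eventually_le_left (hh.differentiableAt t₀ ht₀ x₀) ?_
    filter_upwards [Ioo_mem_nhdsLT ht₀] with s hs
    exact hx₀ ▸ (hbefore s ⟨hs.1.le, hs.2⟩ x₀).le
  have hspace : lap (h t₀) x₀ ≤ 0 := lap_nonpos_of_isLocalMax (hh.contDiff t₀ ht₀)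
    (IsMaxOn.isLocalMax (fun y _ => hx₀ ▸ hmax y) univ_mem)
  have hop := hzero t₀ ht₀ x₀ hx₀
  rw [heatOp] at hop
  linarith [mul_nonpos_of_nonneg_of_nonpos hd hspace]

def coerciveBarrier (κ t : ℝ) (x : Euc N) : ℝ := Real.exp (κ * t) * (1 + ‖x‖ ^ 2)

lemma coerciveBarrier_pos (κ t : ℝ) (x : Euc N) : 0 < coerciveBarrier κ t x :=
  mul_pos (Real.exp_pos _) (by positivity)

lemma lap_one_add_norm_sq (x : Euc N) : lap (fun y => 1 + ‖y‖ ^ 2) x = 2 * N := by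
  have hfirst : ∀ y w : Euc N, fderiv ℝ (fun y => 1 + ‖y‖ ^ 2) y w = 2 * inner ℝ w y := by
    intro y w
    rw [((hasStrictFDerivAt_norm_sq y).hasFDerivAt.const_add 1).fderiv]
    simp [real_inner_comm]
  have hsecond : ∀ w : Euc N, fderiv ℝ (fun y => 2 * inner ℝ w y) x w = 2 * ‖w‖ ^ 2 := by
    intro w
    have : HasFDerivAt (fun y => 2 * inner ℝ w y) ((2 : ℝ) • innerSL ℝ w) x :=
      (innerSL ℝ w).hasFDerivAt.const_mul 2
    rw [this.fderiv]
    simp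
  simp only [lap, hfirst, hsecond, PiLp.norm_single]
  simp [mul_comm]

lemma parabolicRegular_coerciveBarrier (κ : ℝ) :
    ParabolicRegular (coerciveBarrier (N := N) κ) where
  continuousOn := Continuous.continuousOn (by unfold coerciveBarrier; fun_prop)
  differentiableAt _ _ _ := by unfold coerciveBarrier; fun_prop
  contDiff _ _ := contDiff_const.mul (contDiff_const.add (contDiff_norm_sq ℝ))

lemma heatOp_coerciveBarrier (d κ t : ℝ) (x : Euc N) :
    heatOp d (coerciveBarrier κ) t x =
      κ * coerciveBarrier κ t x - 2 * d * N * Real.exp (κ * t) := by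
  have htime : HasDerivAt (fun τ => coerciveBarrier κ τ x) (κ * coerciveBarrier κ t x) t :=
    (((hasDerivAt_id' t).const_mul κ).exp.mul_const (1 + ‖x‖ ^ 2)).congr_deriv
      (by rw [coerciveBarrier]; ring)
  have hspace : lap (coerciveBarrier κ t) x = Real.exp (κ * t) * (2 * N) :=
    (lap_const_mul _ (contDiff_const.add (contDiff_norm_sq ℝ)).contDiffAt).trans
      (by rw [lap_one_add_norm_sq])
  rw [heatOp, htime.deriv, hspace]
  ring

lemma exp_le_coerciveBarrier (κ t : ℝ) (x : Euc N) : Real.exp (κ * t) ≤ coerciveBarrier κ t x :=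
  le_mul_of_one_le_right (Real.exp_pos _).le (by nlinarith [norm_nonneg x])

lemma norm_lt_coerciveBarrier {κ t : ℝ} (hκ : 0 ≤ κ) (ht : 0 ≤ t) (x : Euc N) :
    ‖x‖ < coerciveBarrier κ t x := by
  have : 1 ≤ Real.exp (κ * t) := Real.one_le_exp (mul_nonneg hκ ht)
  calc ‖x‖ < 1 + ‖x‖ ^ 2 := by nlinarith [sq_nonneg (‖x‖ - 1)]
    _ ≤ coerciveBarrier κ t x := le_mul_of_one_le_left (by positivity) this

lemma lt_heatOp_coerciveBarrier {d K κ : ℝ} (hd : 0 ≤ d) (hκ : K + 2 * d * N < κ) (t : ℝ)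
    (x : Euc N) : K * coerciveBarrier κ t x < heatOp d (coerciveBarrier κ) t x := by
  rw [heatOp_coerciveBarrier]
  have hB := exp_le_coerciveBarrier κ t x
  have hdN : 0 ≤ 2 * d * N := by positivity
  nlinarith [Real.exp_pos (κ * t)]

theorem ParabolicRegular.nonpos_of_heatOp_le {d K M : ℝ} (hd : 0 ≤ d) {z : ℝ → Euc N → ℝ}
    (hz : ParabolicRegular z) (hM : ∀ t ≥ 0, ∀ x, z t x ≤ M) (h0 : ∀ x, z 0 x ≤ 0)
    (hsub : ∀ t > 0, ∀ x, 0 < z t x → heatOp d z t x ≤ K * z t x) :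
    ∀ t ≥ 0, ∀ x, z t x ≤ 0 := by
  set κ := |K| + 2 * d * N + 1
  have hκ : 0 ≤ κ := by positivity
  have hbelow : ∀ δ > 0, ∀ t ≥ 0, ∀ x, z t x < δ * coerciveBarrier κ t x := by
    intro δ hδ
    have hreg := hz.sub ((parabolicRegular_coerciveBarrier κ).const_mul δ)
    have := hreg.neg_of_heatOp_neg_of_eq_zero hd (K := closedBall 0 (M / δ)) ?_
      (isCompact_closedBall 0 _) ?_ ?_
    · exact fun t ht x => sub_neg.1 (this t ht x)
    · exact fun x => sub_neg.2 ((h0 x).trans_lt (mul_pos hδ (coerciveBarrier_pos κ 0 x)))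
    · intro t ht x hx
      rw [mem_closedBall_zero_iff, not_le, div_lt_iff₀ hδ] at hx
      nlinarith [hM t ht x, norm_lt_coerciveBarrier hκ ht x]
    · intro t ht x hx
      rw [hz.heatOp_sub ((parabolicRegular_coerciveBarrier κ).const_mul δ) ht,
        (parabolicRegular_coerciveBarrier κ).heatOp_const_mul δ ht]
      have hzx : z t x = δ * coerciveBarrier κ t x := sub_eq_zero.1 hx
      have hpos : 0 < z t x := hzx ▸ mul_pos hδ (coerciveBarrier_pos κ t x)
      have hstrict :=
        lt_heatOp_coerciveBarrier (K := K) (κ := κ) hd (by linarith [le_abs_self K]) t x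
      have hsubx := hsub t ht x hpos
      rw [hzx] at hsubx
      linarith [mul_lt_mul_of_pos_left hstrict hδ]
  intro t ht x
  by_contra! hpos
  have hB := coerciveBarrier_pos κ t x
  have := hbelow (z t x / coerciveBarrier κ t x) (div_pos hpos hB) t ht x
  rw [div_mul_cancel₀ _ hB.ne'] at this
  exact lt_irrefl _ this

def planeWave (μ k : ℝ) (e : Euc N) (t : ℝ) (x : Euc N) : ℝ := Real.exp (μ * t - k * inner ℝ e x)

section PlaneWave

variable (μ k : ℝ) (e : Euc N)

lemma planeWave_pos (t : ℝ) (x : Euc N) : 0 < planeWave μ k e t x := Real.exp_pos _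

lemma hasFDerivAt_planeWave (t : ℝ) (x : Euc N) :
    HasFDerivAt (planeWave μ k e t) (planeWave μ k e t x • -(k • innerSL ℝ e)) x :=
  (((innerSL ℝ e).hasFDerivAt.const_mul k).const_sub (μ * t)).exp

lemma fderiv_planeWave_apply (t : ℝ) (y w : Euc N) :
    fderiv ℝ (planeWave μ k e t) y w = -(k * inner ℝ e w) * planeWave μ k e t y := by
  rw [(hasFDerivAt_planeWave μ k e t y).fderiv]
  simp only [smul_neg, neg_apply, smul_apply, coe_innerSL_apply, smul_eq_mul]
  ring

lemma lap_planeWave (t : ℝ) (x : Euc N) :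
    lap (planeWave μ k e t) x = k ^ 2 * ‖e‖ ^ 2 * planeWave μ k e t x := by
  have hsecond : ∀ w, fderiv ℝ (fun y => fderiv ℝ (planeWave μ k e t) y w) x w =
      k ^ 2 * inner ℝ e w ^ 2 * planeWave μ k e t x := by
    intro w
    simp only [fderiv_planeWave_apply]
    rw [fderiv_const_mul (hasFDerivAt_planeWave μ k e t x).differentiableAt]
    simp only [neg_smul, neg_apply, smul_apply, fderiv_planeWave_apply, smul_eq_mul]
    ring
  have hparseval := (EuclideanSpace.basisFun (Fin N) ℝ).sum_sq_inner_left e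
  simp only [EuclideanSpace.basisFun_apply] at hparseval
  simp only [lap, hsecond, ← Finset.sum_mul, ← Finset.mul_sum, hparseval]

lemma hasDerivAt_planeWave_time (t : ℝ) (x : Euc N) :
    HasDerivAt (fun τ => planeWave μ k e τ x) (μ * planeWave μ k e t x) t :=
  (((hasDerivAt_id' t).const_mul μ).sub_const _).exp.congr_deriv
    (by rw [planeWave]; ring)

lemma parabolicRegular_planeWave : ParabolicRegular (planeWave μ k e) where
  continuousOn := Continuous.continuousOn (by unfold planeWave; fun_prop)
  differentiableAt t _ x := (hasDerivAt_planeWave_time μ k e t x).differentiableAt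
  contDiff _ _ := (contDiff_const.sub (contDiff_const.mul (innerSL ℝ e).contDiff)).exp

lemma heatOp_planeWave (d t : ℝ) (x : Euc N) :
    heatOp d (planeWave μ k e) t x = (μ - d * k ^ 2 * ‖e‖ ^ 2) * planeWave μ k e t x := by
  rw [heatOp, (hasDerivAt_planeWave_time μ k e t x).deriv, lap_planeWave]
  ring

lemma planeWave_le_of_mul_le_norm {c t : ℝ} (hk : 0 ≤ k) {x : Euc N} (hx : c * t ≤ ‖x‖) :
    planeWave μ k (‖x‖⁻¹ • x) t x ≤ Real.exp (-((k * c - μ) * t)) := by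
  have hinner : inner ℝ (‖x‖⁻¹ • x) x = ‖x‖ := by
    rw [real_inner_smul_left, real_inner_self_eq_norm_sq, sq, ← mul_assoc, inv_mul_mul_self]
  rw [planeWave, hinner, Real.exp_le_exp]
  nlinarith [mul_le_mul_of_nonneg_left hx hk]

end PlaneWave

lemma exists_kpp_wave {d r c : ℝ} (hd : 0 < d) (hr : 0 < r) (hc : 2 * √(d * r) < c) :
    ∃ k ≥ 0, ∃ μ, d * k ^ 2 + r < μ ∧ μ < k * c := by
  set k := √(r / d)
  have hk : 0 < k := Real.sqrt_pos.2 (div_pos hr hd)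
  have hk2 : d * k ^ 2 = r := by
    rw [Real.sq_sqrt (div_pos hr hd).le]
    field_simp
  have hkr : k * √(d * r) = r := by
    rw [← Real.sqrt_mul (div_pos hr hd).le, show r / d * (d * r) = r ^ 2 by field_simp]
    exact Real.sqrt_sq hr.le
  have hkc : 2 * r < k * c := by nlinarith
  exact ⟨k, hk.le, (2 * r + k * c) / 2, by linarith, by linarith⟩

lemma AdmissibleInit.exists_le_planeWave {u₀ v₀ : Euc N → ℝ} (hinit : AdmissibleInit u₀ v₀)
    {a₂ k : ℝ} (ha₂ : 0 ≤ a₂) (hk : 0 ≤ k) :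
    ∃ C > 0, ∀ μ, ∀ e : Euc N, ‖e‖ ≤ 1 → ∀ x,
      u₀ x ≤ C * planeWave μ k e 0 x ∧ 1 - v₀ x - a₂ * u₀ x ≤ C * planeWave μ k e 0 x := by
  obtain ⟨-, -, hrange, -, K, hK, hout⟩ := hinit
  obtain ⟨R, hR⟩ := hK.isBounded.subset_closedBall 0
  refine ⟨Real.exp (k * R), Real.exp_pos _, fun μ e he x => ?_⟩
  have hW := mul_pos (Real.exp_pos (k * R)) (planeWave_pos μ k e 0 x)
  by_cases hx : x ∈ K
  · have hxR := mem_closedBall_zero_iff.1 (hR hx)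
    have hinner : inner ℝ e x ≤ R := (real_inner_le_norm e x).trans (by nlinarith [norm_nonneg x])
    have hone : 1 ≤ Real.exp (k * R) * planeWave μ k e 0 x := by
      rw [planeWave, ← Real.exp_add]
      exact Real.one_le_exp (by nlinarith)
    obtain ⟨⟨hu₀, hu₁⟩, hv₀, -⟩ := hrange x
    constructor <;> nlinarith
  · obtain ⟨hu, hv⟩ := hout x hx
    rw [hu, hv]
    constructor <;> linarith

lemma exists_forall_ge_mul_exp_neg_le (A : ℝ) {a ε : ℝ} (ha : 0 < a) (hε : 0 < ε) :
    ∃ T, ∀ t ≥ T, A * Real.exp (-(a * t)) ≤ ε := by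
  have hlim : Tendsto (fun t => A * Real.exp (-(a * t))) atTop (𝓝 0) := by
    simpa using (Real.tendsto_exp_neg_atTop_nhds_zero.comp
      (tendsto_id.const_mul_atTop ha)).const_mul A
  exact eventually_atTop.1 (hlim.eventually (ge_mem_nhds hε))

lemma reaction_u_le {r₁ a₁ a₂ u v Q : ℝ} (hr₁ : 0 ≤ r₁) (ha₁ : 0 ≤ a₁) (ha : a₁ * a₂ ≤ 1)
    (hu : u ∈ Icc (0 : ℝ) 1) (hQ : 0 ≤ Q) (hq : 1 - v - a₂ * u ≤ Q) :
    r₁ * u * (1 - u - a₁ * v) ≤ r₁ * (1 - a₁) * u + r₁ * a₁ * Q := by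
  have huq : u * (1 - v - a₂ * u) ≤ Q := by
    rcases le_total (1 - v - a₂ * u) 0 with hneg | hpos
    · nlinarith [hu.1]
    · nlinarith [hu.2]
  -- `1 - u - a₁ v = (1 - a₁) + (a₁ a₂ - 1) u + a₁ (1 - v - a₂ u)`
  nlinarith [mul_nonneg (mul_nonneg hr₁ (sub_nonneg.2 ha)) (sq_nonneg u),
    mul_le_mul_of_nonneg_left huq (mul_nonneg hr₁ ha₁)]

namespace IsLVSolution

variable {d₁ d₂ r₁ r₂ a₁ a₂ : ℝ} {u v : ℝ → Euc N → ℝ}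

lemma parabolicRegular_u (hsol : IsLVSolution d₁ d₂ r₁ r₂ a₁ a₂ u v) : ParabolicRegular u where
  continuousOn := hsol.contu
  differentiableAt _ ht x :=
    ((hsol.smooth_t x).1.contDiffAt (Ioi_mem_nhds ht)).differentiableAt one_ne_zero
  contDiff t ht := (hsol.smooth_x t ht).1

lemma parabolicRegular_v (hsol : IsLVSolution d₁ d₂ r₁ r₂ a₁ a₂ u v) : ParabolicRegular v where
  continuousOn := hsol.contv
  differentiableAt _ ht x :=
    ((hsol.smooth_t x).2.contDiffAt (Ioi_mem_nhds ht)).differentiableAt one_ne_zero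
  contDiff t ht := (hsol.smooth_x t ht).2

lemma heatOp_u (hsol : IsLVSolution d₁ d₂ r₁ r₂ a₁ a₂ u v) {t : ℝ} (ht : 0 < t) (x : Euc N) :
    heatOp d₁ u t x = r₁ * u t x * (1 - u t x - a₁ * v t x) := by
  rw [heatOp, hsol.eqn_u t ht x]
  ring

lemma heatOp_v (hsol : IsLVSolution d₁ d₂ r₁ r₂ a₁ a₂ u v) {t : ℝ} (ht : 0 < t) (x : Euc N) :
    heatOp d₂ v t x = r₂ * v t x * (1 - v t x - a₂ * u t x) := by
  rw [heatOp, hsol.eqn_v t ht x]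
  ring

lemma heatOp_competition_nonpos (hp : LVParams d₁ d₂ r₁ r₂ a₁ a₂)
    (hsol : IsLVSolution d₁ d₂ r₁ r₂ a₁ a₂ u v) (hd : d₁ = d₂) (ha : a₁ * a₂ ≤ 1)
    (hrange : ∀ t ≥ 0, ∀ x, u t x ∈ Icc (0 : ℝ) 1 ∧ v t x ∈ Icc (0 : ℝ) 1) {t : ℝ} (ht : 0 < t)
    {x : Euc N}
    (hq : 0 < 1 - v t x - a₂ * u t x) :
    heatOp d₁ (fun t x => 1 - v t x - a₂ * u t x) t x ≤ 0 := by
  obtain ⟨-, -, hr₁, hr₂, ha₁, ha₁', ha₂⟩ := hp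
  obtain ⟨⟨hu₀, hu₁⟩, hv₀, -⟩ := hrange t ht.le x
  rw [(hsol.parabolicRegular_v.const_sub 1).heatOp_sub (hsol.parabolicRegular_u.const_mul a₂) ht,
    heatOp_const_sub, hsol.parabolicRegular_u.heatOp_const_mul a₂ ht, hd, hsol.heatOp_v ht,
    ← hd, hsol.heatOp_u ht]
  have hcompetitor : 0 ≤ 1 - u t x - a₁ * v t x := by nlinarith
  nlinarith [mul_nonneg (mul_nonneg hr₂.le hv₀) hq.le,
    mul_nonneg (mul_nonneg (mul_nonneg (by linarith : (0 : ℝ) ≤ a₂) hr₁.le) hu₀) hcompetitor]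


lemma competition_le_planeWave (hp : LVParams d₁ d₂ r₁ r₂ a₁ a₂)
    (hsol : IsLVSolution d₁ d₂ r₁ r₂ a₁ a₂ u v) (hd : d₁ = d₂) (ha : a₁ * a₂ ≤ 1)
    (hrange : ∀ t ≥ 0, ∀ x, u t x ∈ Icc (0 : ℝ) 1 ∧ v t x ∈ Icc (0 : ℝ) 1)
    {μ k C : ℝ} {e : Euc N} (hμ : d₁ * k ^ 2 * ‖e‖ ^ 2 ≤ μ) (hC : 0 ≤ C)
    (h0 : ∀ x, 1 - v 0 x - a₂ * u 0 x ≤ C * planeWave μ k e 0 x) :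
    ∀ t ≥ 0, ∀ x, 1 - v t x - a₂ * u t x ≤ C * planeWave μ k e t x := by
  have hq := (hsol.parabolicRegular_v.const_sub 1).sub (hsol.parabolicRegular_u.const_mul a₂)
  have hW := (parabolicRegular_planeWave μ k e).const_mul C
  have hz := (hq.sub hW).nonpos_of_heatOp_le (K := 0) (M := 1) hp.1.le ?_
    (fun x => sub_nonpos.2 (h0 x)) ?_
  · exact fun t ht x => sub_nonpos.1 (hz t ht x)
  · intro t ht x
    obtain ⟨⟨hu₀, -⟩, hv₀, -⟩ := hrange t ht x
    nlinarith [mul_nonneg hC (planeWave_pos μ k e t x).le, hp.2.2.2.2.2.2]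
  · intro t ht x hpos
    have hW₀ := mul_nonneg hC (planeWave_pos μ k e t x).le
    rw [hq.heatOp_sub hW ht, (parabolicRegular_planeWave μ k e).heatOp_const_mul C ht,
      heatOp_planeWave, zero_mul]
    have := hsol.heatOp_competition_nonpos hp hd ha hrange ht (by linarith)
    nlinarith [mul_nonneg hW₀ (sub_nonneg.2 hμ)]

lemma u_le_planeWave (hp : LVParams d₁ d₂ r₁ r₂ a₁ a₂)
    (hsol : IsLVSolution d₁ d₂ r₁ r₂ a₁ a₂ u v) (ha : a₁ * a₂ ≤ 1)
    (hrange : ∀ t ≥ 0, ∀ x, u t x ∈ Icc (0 : ℝ) 1 ∧ v t x ∈ Icc (0 : ℝ) 1)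
    {μ k C A : ℝ} {e : Euc N} (hC : 0 ≤ C) (hA : 0 ≤ A)
    (hμ : r₁ * a₁ * C + r₁ * (1 - a₁) * A ≤ (μ - d₁ * k ^ 2 * ‖e‖ ^ 2) * A)
    (hq : ∀ t ≥ 0, ∀ x, 1 - v t x - a₂ * u t x ≤ C * planeWave μ k e t x)
    (h0 : ∀ x, u 0 x ≤ A * planeWave μ k e 0 x) :
    ∀ t ≥ 0, ∀ x, u t x ≤ A * planeWave μ k e t x := by
  have hW := (parabolicRegular_planeWave μ k e).const_mul A
  have hz := (hsol.parabolicRegular_u.sub hW).nonpos_of_heatOp_le (K := r₁ * (1 - a₁)) (M := 1)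
    hp.1.le ?_ (fun x => sub_nonpos.2 (h0 x)) ?_
  · exact fun t ht x => sub_nonpos.1 (hz t ht x)
  · intro t ht x
    nlinarith [mul_nonneg hA (planeWave_pos μ k e t x).le, (hrange t ht x).1.2]
  · intro t ht x _
    have hWpos := planeWave_pos μ k e t x
    rw [hsol.parabolicRegular_u.heatOp_sub hW ht,
      (parabolicRegular_planeWave μ k e).heatOp_const_mul A ht, heatOp_planeWave, hsol.heatOp_u ht]
    have := reaction_u_le hp.2.2.1.le hp.2.2.2.2.1.le ha (hrange t ht.le x).1
      (mul_nonneg hC hWpos.le) (hq t ht.le x)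
    nlinarith [mul_le_mul_of_nonneg_right hμ hWpos.le]

lemma exists_planeWave_bound (hp : LVParams d₁ d₂ r₁ r₂ a₁ a₂)
    (hsol : IsLVSolution d₁ d₂ r₁ r₂ a₁ a₂ u v) (hd : d₁ = d₂) (ha : a₁ * a₂ ≤ 1)
    (hrange : ∀ t ≥ 0, ∀ x, u t x ∈ Icc (0 : ℝ) 1 ∧ v t x ∈ Icc (0 : ℝ) 1)
    {μ k C : ℝ} (hμ : d₁ * k ^ 2 + r₁ * (1 - a₁) < μ) (hC : 0 ≤ C)
    (h0 : ∀ e : Euc N, ‖e‖ = 1 → ∀ x,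
      u 0 x ≤ C * planeWave μ k e 0 x ∧ 1 - v 0 x - a₂ * u 0 x ≤ C * planeWave μ k e 0 x) :
    ∃ B ≥ 0, ∀ e : Euc N, ‖e‖ = 1 → ∀ t ≥ 0, ∀ x,
      u t x + |1 - v t x| ≤ B * planeWave μ k e t x := by
  have ⟨_, _, hr₁, _, ha₁, _, ha₂⟩ := hp
  set δ := μ - d₁ * k ^ 2 - r₁ * (1 - a₁)
  have hδ : 0 < δ := by linarith
  set A := C + r₁ * a₁ * C / δ
  have hCA : C ≤ A := le_add_of_nonneg_right (by positivity)
  have hδA : r₁ * a₁ * C ≤ δ * A := by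
    have : δ * A = δ * C + r₁ * a₁ * C := by rw [mul_add, mul_div_cancel₀ _ hδ.ne']
    nlinarith [mul_nonneg hδ.le hC]
  refine ⟨C + (1 + a₂) * A, by positivity, fun e he t ht x => ?_⟩
  have hq := hsol.competition_le_planeWave hp hd ha hrange (by rw [he]; nlinarith [sq_nonneg k])
    hC (fun x => (h0 e he x).2)
  have hu := hsol.u_le_planeWave hp ha hrange hC (hC.trans hCA) (by rw [he]; nlinarith) hq
    (fun x => (h0 e he x).1.trans (mul_le_mul_of_nonneg_right hCA (planeWave_pos μ k e 0 x).le))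
  rw [abs_of_nonneg (sub_nonneg.2 (hrange t ht x).2.2)]
  nlinarith [hq t ht x, hu t ht x]

end IsLVSolution

theorem spreading_upper_bound_uv_general {N : ℕ} (d₁ d₂ r₁ r₂ a₁ a₂ : ℝ)
    (hp : LVParams d₁ d₂ r₁ r₂ a₁ a₂) (hd : d₁ = d₂) (ha : a₁ * a₂ ≤ 1)
    (u v : ℝ → Euc N → ℝ) (hsol : IsLVSolution d₁ d₂ r₁ r₂ a₁ a₂ u v)
    (hrange : ∀ t : ℝ, 0 ≤ t → ∀ x : Euc N, u t x ∈ Icc (0:ℝ) 1 ∧ v t x ∈ Icc (0:ℝ) 1)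
    (u₀ v₀ : Euc N → ℝ) (hinit : AdmissibleInit u₀ v₀)
    (hu0 : ∀ x, u 0 x = u₀ x) (hv0 : ∀ x, v 0 x = v₀ x) :
    ∀ c : ℝ, 2 * Real.sqrt (d₁ * r₁ * (1 - a₁)) < c →
      ∀ ε > (0:ℝ), ∃ T : ℝ, ∀ t : ℝ, T ≤ t → ∀ x : Euc N, c * t ≤ ‖x‖ →
        u t x + |1 - v t x| ≤ ε := by
  intro c hc ε hε
  have ⟨hd₁, _, hr₁, _, _, ha₁, ha₂⟩ := hp
  have hc₀ : 0 < c := by linarith [Real.sqrt_nonneg (d₁ * r₁ * (1 - a₁))]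
  obtain ⟨k, hk, μ, hμ, hμc⟩ :=
    exists_kpp_wave hd₁ (mul_pos hr₁ (sub_pos.2 ha₁)) (by rwa [← mul_assoc])
  obtain ⟨C, hC, hC₀⟩ := hinit.exists_le_planeWave (a₂ := a₂) (by linarith) hk
  obtain ⟨B, hB, hbound⟩ := hsol.exists_planeWave_bound hp hd ha hrange hμ hC.le
    fun e he x => by simpa only [hu0, hv0] using hC₀ μ e he.le x
  obtain ⟨T, hT⟩ := exists_forall_ge_mul_exp_neg_le B (sub_pos.2 hμc) hε
  refine ⟨max T 1, fun t ht x hx => ?_⟩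
  have ht₁ : 1 ≤ t := le_of_max_le_right ht
  have hx₀ : x ≠ 0 := norm_pos_iff.1 ((mul_pos hc₀ (by linarith)).trans_le hx)
  calc u t x + |1 - v t x| ≤ B * planeWave μ k (‖x‖⁻¹ • x) t x :=
        hbound _ (norm_smul_inv_norm hx₀) t (by linarith) x
    _ ≤ B * Real.exp (-((k * c - μ) * t)) :=
        mul_le_mul_of_nonneg_left (planeWave_le_of_mul_le_norm μ k hk hx) hB
    _ ≤ ε := hT t (le_of_max_le_left ht)

/-- if `d₁ = d₂` and `a₁a₂ ≤ 1`, then for every `c > 2√(d₁r₁(1−a₁))`,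
`sup_{|x| ≥ ct} (u(t,x) + |1 − v(t,x)|) → 0` as `t → +∞`. -/
theorem spreading_upper_bound_uv {N : ℕ} (hN : 2 ≤ N) (d₁ d₂ r₁ r₂ a₁ a₂ : ℝ)
    (hp : LVParams d₁ d₂ r₁ r₂ a₁ a₂) (hd : d₁ = d₂) (ha : a₁ * a₂ ≤ 1)
    (u v : ℝ → Euc N → ℝ) (hsol : IsLVSolution d₁ d₂ r₁ r₂ a₁ a₂ u v)
    (hrange : ∀ t : ℝ, 0 ≤ t → ∀ x : Euc N, u t x ∈ Icc (0:ℝ) 1 ∧ v t x ∈ Icc (0:ℝ) 1)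
    (u₀ v₀ : Euc N → ℝ) (hinit : AdmissibleInit u₀ v₀)
    (hu0 : ∀ x, u 0 x = u₀ x) (hv0 : ∀ x, v 0 x = v₀ x) :
    ∀ c : ℝ, 2 * Real.sqrt (d₁ * r₁ * (1 - a₁)) < c →
      ∀ ε > (0:ℝ), ∃ T : ℝ, ∀ t : ℝ, T ≤ t → ∀ x : Euc N, c * t ≤ ‖x‖ →
        u t x + |1 - v t x| ≤ ε :=
  spreading_upper_bound_uv_general d₁ d₂ r₁ r₂ a₁ a₂ hp hd ha u v hsol hrange u₀ v₀ hinit hu0 hv0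
end
end
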